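/- arXiv:0810.4389 — 2 statements merged into one kernel-verified Lean document; each statement's English description precedes it below -/
import Mathlib

section
/- For every n-component Gauss phrase p and every k, the set O_k(p) contains an even number of k-odd orbits. Here the k-th entry of the linking vector l_k of the k-th component is 0, so all vectors in a given orbit of K(l_k) have the same k-th entry, and an orbit is called k-odd if its vectors have k-th entry 1. -/
/-- A word is a finite sequence of letters; we take the letters to be natural numbers. -/
abbrev Word := List ℕ

/-- An `n`-component phrase: an `n`-tuple of words. -/
abbrev Phrase (n : ℕ) := Fin n → Word

/-- The concatenation of all the components of a phrase. -/
def totalWord {n : ℕ} (p : Phrase n) : Word := (List.ofFn p).flatten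

/-- A Gauss word: every letter that appears does so exactly twice. -/
def IsGaussWord (w : Word) : Prop := ∀ a ∈ w, w.count a = 2

/-- A Gauss phrase: the concatenation of the components is a Gauss word. -/
def IsGaussPhrase {n : ℕ} (p : Phrase n) : Prop := IsGaussWord (totalWord p)

/-- The phrase written as a single word with separators (`none`) between components. -/
def sepWord {n : ℕ} (p : Phrase n) : List (Option ℕ) :=
  List.intercalate [none] (List.ofFn fun i => (p i).map some)

/-- A single open homotopy move: isomorphism, H1, H2 or H3.  Adjacency of two letters
in `sepWord p` means exactly that they are adjacent inside a single component. -/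
inductive OpenMove {n : ℕ} : Phrase n → Phrase n → Prop
  | iso (p : Phrase n) (f : ℕ → ℕ) (hf : Function.Bijective f) :
      OpenMove p (fun i => (p i).map f)
  | h1 (p q : Phrase n) (A : ℕ) (x y : List (Option ℕ))
      (hA : some A ∉ x ++ y)
      (hp : sepWord p = x ++ some A :: some A :: y)
      (hq : sepWord q = x ++ y) : OpenMove p q
  | h2 (p q : Phrase n) (A B : ℕ) (x y z : List (Option ℕ))
      (hAB : A ≠ B)
      (hA : some A ∉ x ++ y ++ z) (hB : some B ∉ x ++ y ++ z)
      (hp : sepWord p = x ++ some A :: some B :: (y ++ some B :: some A :: z))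
      (hq : sepWord q = x ++ y ++ z) : OpenMove p q
  | h3 (p q : Phrase n) (A B C : ℕ) (w x y z : List (Option ℕ))
      (hAB : A ≠ B) (hAC : A ≠ C) (hBC : B ≠ C)
      (hA : some A ∉ w ++ x ++ y ++ z) (hB : some B ∉ w ++ x ++ y ++ z)
      (hC : some C ∉ w ++ x ++ y ++ z)
      (hp : sepWord p =
        w ++ some A :: some B :: (x ++ some A :: some C :: (y ++ some B :: some C :: z)))
      (hq : sepWord q =
        w ++ some B :: some A :: (x ++ some C :: some A :: (y ++ some C :: some B :: z))) :
      OpenMove p q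

/-- The shift move: move the first letter of a component to its end. -/
inductive ShiftMove {n : ℕ} : Phrase n → Phrase n → Prop
  | shift (p : Phrase n) (k : Fin n) (A : ℕ) (y : Word) (hp : p k = A :: y) :
      ShiftMove p (Function.update p k (y ++ [A]))

/-- Open homotopy: the equivalence relation generated by isomorphisms and the
moves H1, H2, H3 (and their inverses). -/
def OpenHomotopic {n : ℕ} (p q : Phrase n) : Prop :=
  Relation.EqvGen (@OpenMove n) p q

/-- Homotopy: the equivalence relation generated by isomorphisms, shift moves and the
moves H1, H2, H3 (and their inverses). -/
def Homotopic {n : ℕ} (p q : Phrase n) : Prop :=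
  Relation.EqvGen (fun a b => OpenMove a b ∨ ShiftMove a b) p q

/-- The linking matrix of a phrase: the `(i,j)` entry, for `i ≠ j`, is the number
modulo 2 of (two-component) letters with one occurrence in component `i` and the
other occurrence in component `j`; the diagonal entries are `0`. -/
def linkingMatrix {n : ℕ} (p : Phrase n) : Matrix (Fin n) (Fin n) (ZMod 2) :=
  Matrix.of fun i j =>
    if i = j then 0
    else (((totalWord p).toFinset.filter
        fun a => (p i).count a = 1 ∧ (p j).count a = 1).card : ZMod 2)

/-- The subword strictly between the two occurrences of the letter `a` in `w`
(for a letter occurring exactly twice in `w`). -/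
def betweenWord (w : Word) (a : ℕ) : Word :=
  (w.drop (w.idxOf a + 1)).takeWhile fun b => b ≠ a

/-- Fukunaga's `T` invariant: `Tk p k` is the number, modulo 2, of odd-parity
single-component letters in the `k`-th component of `p`. -/
def Tk {n : ℕ} (p : Phrase n) (k : Fin n) : ZMod 2 :=
  (((p k).toFinset.filter
      fun a => (p k).count a = 2 ∧ Odd (betweenWord (p k) a).length).card : ZMod 2)

/-- The linking vector of a subword `w` of the `k`-th component of `p`: the `i`-th entry
is the number modulo 2 of letters occurring exactly once in `w` whose other occurrence
lies in the `i`-th component of `p`. -/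
def linkVec {n : ℕ} (p : Phrase n) (k : Fin n) (w : Word) : Fin n → ZMod 2 :=
  fun i =>
    ((w.toFinset.filter fun a => w.count a = 1 ∧
        (if i = k then (p k).count a = 2 else a ∈ p i)).card : ZMod 2)

/-- The linking vector of a single-component letter `a` of the `k`-th component:
the linking vector of the word between its two occurrences. -/
def letterVec {n : ℕ} (p : Phrase n) (k : Fin n) (a : ℕ) : Fin n → ZMod 2 :=
  linkVec p k (betweenWord (p k) a)

/-- `Bk p k`: the set of nonzero vectors `v ∈ (ℤ/2)ⁿ` which are the linking vector of an
odd number of single-component letters of the `k`-th component of `p`. -/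
def Bk {n : ℕ} (p : Phrase n) (k : Fin n) : Finset (Fin n → ZMod 2) :=
  Finset.univ.filter fun v => v ≠ 0 ∧
    Odd (((p k).toFinset.filter fun a => (p k).count a = 2 ∧ letterVec p k a = v).card)

/-- `Ok p k`: the set of orbits of `(ℤ/2)ⁿ` under translation by the linking vector of the
`k`-th component, other than the orbit of `0`, which contain the linking vector of an odd
number of single-component letters of the `k`-th component.  An orbit is recorded as the
finite set of its elements. -/
def Ok {n : ℕ} (p : Phrase n) (k : Fin n) : Finset (Finset (Fin n → ZMod 2)) :=
  Finset.univ.filter fun O =>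
    (∃ v : Fin n → ZMod 2, O = {v, v + linkVec p k (p k)}) ∧
    (0 : Fin n → ZMod 2) ∉ O ∧
    Odd (((p k).toFinset.filter fun a => (p k).count a = 2 ∧ letterVec p k a ∈ O).card)


/-!
Since `(l_k)_k = 0`, translation by `l_k` fixes the `k`-th coordinate, so the `k`-odd orbits
partition the vectors with `k`-th entry `1`, and the numbers of single-component letters `A` with
`l(A)` in each `k`-odd orbit add up to the number of those with `l(A)_k = 1`. A sum of naturals
is even iff it has an even number of odd terms, so it suffices that this number is even.

Modulo 2, `l(A)_k` counts the single-component letters `B` occurring once between the two `A`s,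
and this count is symmetric in `A` and `B`: it is the parity of the number of pairs "an occurrence
of `B` before one of `A`", and the pairs in both orders number `2 · 2`. Hence `∑_A l(A)_k = 0`
in `ℤ/2` by the handshake argument.
-/

open Finset

section PrecCount

variable {α : Type*} [DecidableEq α]

/-- The number of pairs of positions `i < j` with `w[i] = b` and `w[j] = a`. -/
def precCount (b a : α) : List α → ℕ
  | [] => 0
  | c :: t => (if c = b then t.count a else 0) + precCount b a t

theorem precCount_append (b a : α) (u v : List α) :
    precCount b a (u ++ v) = precCount b a u + precCount b a v + u.count b * v.count a := by
  induction u with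
  | nil => simp [precCount]
  | cons c t ih =>
    by_cases hc : c = b
    · simp only [hc, List.cons_append, precCount, ↓reduceIte, List.count_append, ih,
        List.count_cons_self]
      ring
    · simp [precCount, ih, hc]

theorem precCount_eq_zero_of_notMem (b : α) {a : α} {w : List α} (h : a ∉ w) :
    precCount b a w = 0 := by
  induction w with
  | nil => rfl
  | cons c t ih =>
    rw [List.mem_cons, not_or] at h
    simp [precCount, ih h.2, List.count_eq_zero_of_not_mem h.2]

theorem precCount_add_precCount {a b : α} (hab : a ≠ b) (w : List α) :
    precCount b a w + precCount a b w = w.count a * w.count b := by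
  induction w with
  | nil => simp [precCount]
  | cons c t ih =>
    by_cases hca : c = a
    · subst hca
      simp only [precCount, if_neg hab, if_true, List.count_cons_self,
        List.count_cons_of_ne hab]
      rw [add_one_mul, ← ih]
      ring
    · by_cases hcb : c = b
      · subst hcb
        simp only [precCount, if_neg (Ne.symm hab), if_true, List.count_cons_self,
          List.count_cons_of_ne (Ne.symm hab)]
        rw [mul_add_one, ← ih]
        ring
      · simp [precCount, hca, hcb, ih]

end PrecCount

theorem betweenWord_sublist (w : Word) (a : ℕ) : (betweenWord w a).Sublist w :=
  (List.takeWhile_sublist _).trans (List.drop_sublist _ _)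

theorem notMem_betweenWord (w : Word) (a : ℕ) : a ∉ betweenWord w a := by
  intro h
  simpa using List.mem_takeWhile_imp h

theorem eq_append_betweenWord {w : Word} {a : ℕ} (h : w.count a = 2) :
    ∃ x z, w = x ++ a :: (betweenWord w a ++ a :: z) ∧ a ∉ x ∧ a ∉ z := by
  obtain ⟨x, t, rfl, hx⟩ :=
    List.eq_append_cons_of_mem (List.count_pos_iff.mp (by omega : 0 < w.count a))
  have ht : t.count a = 1 := by
    rw [List.count_append, List.count_eq_zero_of_not_mem hx, List.count_cons_self] at h
    omega
  obtain ⟨y, z, rfl, hy⟩ :=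
    List.eq_append_cons_of_mem (List.count_pos_iff.mp (by omega : 0 < t.count a))
  have hz : a ∉ z := by
    simpa [List.count_append, List.count_eq_zero_of_not_mem hy, List.count_eq_zero] using ht
  refine ⟨x, z, ?_, hx, hz⟩
  have hbetween : betweenWord (x ++ a :: (y ++ a :: z)) a = y := by
    rw [betweenWord, List.idxOf_append_of_notMem hx, List.idxOf_cons_self, add_zero,
      List.append_cons, List.drop_left' (by simp),
      List.takeWhile_append_of_pos]
    · simp
    · intro b hb
      simpa using ne_of_mem_of_not_mem hb hy
  rw [hbetween]

theorem natCast_precCount_eq_count_betweenWord {w : Word} {a b : ℕ} (hab : a ≠ b)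
    (ha : w.count a = 2) : (precCount b a w : ZMod 2) = (betweenWord w a).count b := by
  obtain ⟨x, z, hw, hx, hz⟩ := eq_append_betweenWord ha
  have hy := notMem_betweenWord w a
  set y := betweenWord w a
  have hcount : precCount b a w = x.count b * 2 + y.count b := by
    rw [hw]
    simp only [precCount_append, precCount, if_neg hab, precCount_eq_zero_of_notMem b hx,
      precCount_eq_zero_of_notMem b hy, precCount_eq_zero_of_notMem b hz, List.count_append,
      List.count_cons_self, List.count_eq_zero_of_not_mem hy, List.count_eq_zero_of_not_mem hz]
    ring
  rw [hcount, Nat.cast_add, Nat.cast_mul, Nat.cast_ofNat,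
    show (2 : ZMod 2) = 0 from rfl, mul_zero, zero_add]

theorem natCast_count_betweenWord_comm {w : Word} {a b : ℕ} (ha : w.count a = 2)
    (hb : w.count b = 2) :
    ((betweenWord w a).count b : ZMod 2) = (betweenWord w b).count a := by
  rcases eq_or_ne a b with rfl | hab
  · rfl
  rw [← natCast_precCount_eq_count_betweenWord hab ha,
    ← natCast_precCount_eq_count_betweenWord (Ne.symm hab) hb]
  have hsum : (precCount b a w : ZMod 2) + precCount a b w = 0 := by
    rw [← Nat.cast_add, precCount_add_precCount hab, ha, hb]
    rfl
  exact (eq_neg_of_add_eq_zero_left hsum).trans (ZMod.neg_eq_self_mod_two _)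

theorem ZMod.sum_sum_eq_zero_of_symm {ι : Type*} (s : Finset ι) (m : ι → ι → ZMod 2)
    (hsymm : ∀ a ∈ s, ∀ b ∈ s, m a b = m b a) (hdiag : ∀ a ∈ s, m a a = 0) :
    ∑ a ∈ s, ∑ b ∈ s, m a b = 0 := by
  rw [← sum_product' (f := m)]
  refine sum_involution (fun q _ => q.swap) ?_ ?_ ?_ ?_
  · rintro ⟨a, b⟩ hq
    rw [mem_product] at hq
    rw [Prod.fst_swap, Prod.snd_swap, hsymm a hq.1 b hq.2, CharTwo.add_self_eq_zero]
  · rintro ⟨a, b⟩ hq hne hswap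
    obtain rfl : b = a := congrArg Prod.fst hswap
    exact hne (hdiag b (mem_product.mp hq).1)
  · rintro ⟨a, b⟩ hq
    exact mem_product.mpr (mem_product.mp hq).symm
  · exact fun q _ => q.swap_swap

theorem ZMod.natCast_card_filter_eq_one {ι : Type*} (s : Finset ι) (f : ι → ZMod 2) :
    (#{a ∈ s | f a = 1} : ZMod 2) = ∑ a ∈ s, f a := by
  rw [card_filter, Nat.cast_sum]
  refine sum_congr rfl fun a _ => ?_
  generalize f a = x
  fin_cases x <;> rfl

/-- The single-component letters of a component. -/
def doubleLetters (w : Word) : Finset ℕ := {a ∈ w.toFinset | w.count a = 2}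

theorem linkVec_apply_self_of_sublist {n : ℕ} (p : Phrase n) (k : Fin n) {u : Word}
    (hu : u.Sublist (p k)) :
    linkVec p k u k = ∑ b ∈ doubleLetters (p k), (u.count b : ZMod 2) := by
  rw [← ZMod.natCast_card_filter_eq_one]
  unfold linkVec
  congr 2
  ext b
  simp only [doubleLetters, mem_filter, List.mem_toFinset, if_true, ZMod.natCast_eq_one_iff_odd,
    Nat.odd_iff]
  have hle := hu.count_le b
  constructor
  · rintro ⟨hb, h1, h2⟩
    exact ⟨⟨hu.subset hb, h2⟩, by omega⟩
  · rintro ⟨⟨_, h2⟩, h1⟩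
    have h1' : u.count b = 1 := by omega
    exact ⟨List.count_pos_iff.mp (by omega), h1', h2⟩

theorem linkVec_self_apply_self {n : ℕ} (p : Phrase n) (k : Fin n) :
    linkVec p k (p k) k = 0 := by
  rw [linkVec_apply_self_of_sublist p k (List.Sublist.refl _)]
  refine sum_eq_zero fun b hb => ?_
  rw [(mem_filter.mp hb).2]
  rfl

theorem even_card_letterVec_apply_self_eq_one {n : ℕ} (p : Phrase n) (k : Fin n) :
    Even #{a ∈ doubleLetters (p k) | letterVec p k a k = 1} := by
  rw [← ZMod.natCast_eq_zero_iff_even, ZMod.natCast_card_filter_eq_one]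
  simp only [letterVec, linkVec_apply_self_of_sublist p k (betweenWord_sublist _ _)]
  refine ZMod.sum_sum_eq_zero_of_symm _ _ (fun a ha b hb => ?_) (fun a _ => ?_)
  · exact natCast_count_betweenWord_comm (mem_filter.mp ha).2 (mem_filter.mp hb).2
  · rw [List.count_eq_zero_of_not_mem (notMem_betweenWord _ a), Nat.cast_zero]

section PairOrbits

variable {V : Type*} [AddCommGroup V] [DecidableEq V] {l : V}

theorem pair_add_eq_of_mem (hl : l + l = 0) {u v : V} (hu : u ∈ ({v, v + l} : Finset V)) :
    ({u, u + l} : Finset V) = {v, v + l} := by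
  rcases mem_insert.mp hu with rfl | hu
  · rfl
  · rw [mem_singleton.mp hu, add_assoc, hl, add_zero, pair_comm]

theorem even_card_odd_orbit_fibers {ι : Type*} (S : Finset ι) (f : ι → V) (hl : l + l = 0)
    (T : Finset V) (hT : ∀ v ∈ T, v + l ∈ T) (heven : Even #{a ∈ S | f a ∈ T}) :
    Even #{O ∈ T.image (fun v => ({v, v + l} : Finset V)) | Odd #{a ∈ S | f a ∈ O}} := by
  rw [card_eq_sum_card_fiberwise (f := fun a => ({f a, f a + l} : Finset V))
    (t := T.image fun v => {v, v + l})
    (fun a ha => mem_image_of_mem _ (mem_filter.mp ha).2)] at heven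
  rw [← even_sum_iff_even_card_odd]
  convert heven using 2 with O hO
  obtain ⟨v, hv, rfl⟩ := mem_image.mp hO
  rw [filter_filter]
  refine congrArg card <| filter_congr fun a _ =>
    ⟨fun ha => ⟨?_, pair_add_eq_of_mem hl ha⟩, fun ha => ?_⟩
  · rcases mem_insert.mp ha with ha | ha
    · exact ha ▸ hv
    · exact mem_singleton.mp ha ▸ hT v hv
  · exact ha.2 ▸ mem_insert_self _ _

end PairOrbits

theorem apply_self_eq_of_mem_pair_linkVec {n : ℕ} (p : Phrase n) (k : Fin n)
    {u v : Fin n → ZMod 2} (hu : u ∈ ({v, v + linkVec p k (p k)} : Finset _)) : u k = v k := by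
  rcases mem_insert.mp hu with rfl | hu
  · rfl
  · rw [mem_singleton.mp hu, Pi.add_apply, linkVec_self_apply_self, add_zero]

theorem filter_Ok_eq_image_filter_odd {n : ℕ} (p : Phrase n) (k : Fin n) :
    (Ok p k).filter (fun O => ∀ v ∈ O, v k = 1) =
      {O ∈ (univ.filter fun v : Fin n → ZMod 2 => v k = 1).image
          (fun v => ({v, v + linkVec p k (p k)} : Finset (Fin n → ZMod 2))) |
        Odd #{a ∈ doubleLetters (p k) | letterVec p k a ∈ O}} := by
  ext O
  simp only [Ok, doubleLetters, filter_filter, mem_filter, mem_univ, true_and, mem_image]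
  constructor
  · rintro ⟨⟨⟨v, rfl⟩, -, hodd⟩, hall⟩
    exact ⟨⟨v, hall v (mem_insert_self _ _), rfl⟩, hodd⟩
  · rintro ⟨⟨v, hv, rfl⟩, hodd⟩
    have hall : ∀ u ∈ ({v, v + linkVec p k (p k)} : Finset _), u k = 1 :=
      fun u hu => (apply_self_eq_of_mem_pair_linkVec p k hu).trans hv
    exact ⟨⟨⟨v, rfl⟩, fun h0 => zero_ne_one (hall 0 h0), hodd⟩, hall⟩

theorem Ok_even_number_of_k_odd_orbits_general {n : ℕ} (p : Phrase n) (k : Fin n) :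
    Even (((Ok p k).filter fun O => ∀ v ∈ O, v k = 1).card) := by
  rw [filter_Ok_eq_image_filter_odd]
  refine even_card_odd_orbit_fibers (V := Fin n → ZMod 2) _ _
    (funext fun _ => CharTwo.add_self_eq_zero _) _ (fun v hv => ?_) ?_
  · have hlk := apply_self_eq_of_mem_pair_linkVec p k (v := v)
      (mem_insert_of_mem (mem_singleton_self _))
    exact mem_filter.mpr ⟨mem_univ _, hlk.trans (mem_filter.mp hv).2⟩
  · simpa only [mem_filter, mem_univ, true_and] using even_card_letterVec_apply_self_eq_one p k

/-- `O_k(p)` contains an even number of `k`-odd orbits (orbits all of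
whose vectors have `k`-th entry `1`). -/
theorem Ok_even_number_of_k_odd_orbits {n : ℕ} (p : Phrase n)
    (hp : IsGaussPhrase p) (k : Fin n) :
    Even (((Ok p k).filter fun O => ∀ v ∈ O, v k = 1).card) :=
  Ok_even_number_of_k_odd_orbits_general p k
end

section
/- The 3-component Gauss phrases ∅|∅|∅ (all three components empty) and AB|AC|BC are not homotopic. -/
/-!
The linking matrix modulo 2 is a homotopy invariant. Isomorphisms and shifts do not change, up to
renaming letters, how often a letter occurs in each component, and neither do H3 and (for the
letters that link two components) H1. The move H2 deletes two letters lying in the same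
components, so their contributions to every entry cancel modulo 2. The phrase `∅|∅|∅` has zero
linking matrix, whereas in `AB|AC|BC` the letter `A` links the first two components.
-/

/-- `tagComp c s` pairs every letter of the separated word `s` with the index of its component,
the components being numbered from `c`. -/
def tagComp (c : ℕ) : List (Option ℕ) → List (ℕ × ℕ)
  | [] => []
  | none :: t => tagComp (c + 1) t
  | some a :: t => (c, a) :: tagComp c t

theorem tagComp_append (c : ℕ) (u v : List (Option ℕ)) :
    tagComp c (u ++ v) = tagComp c u ++ tagComp (c + u.count none) v := by
  induction u generalizing c with
  | nil => simp [tagComp]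
  | cons o t ih =>
    cases o with
    | none => simp [tagComp, ih, Nat.add_assoc, Nat.add_comm 1]
    | some a => simp [tagComp, ih]

theorem tagComp_map_some (c : ℕ) (w : Word) : tagComp c (w.map some) = w.map (c, ·) := by
  induction w with
  | nil => rfl
  | cons a t ih => simp [tagComp, ih]

theorem some_mem_of_mem_tagComp {c i a : ℕ} {s : List (Option ℕ)} (h : (i, a) ∈ tagComp c s) :
    some a ∈ s := by
  induction s generalizing c with
  | nil => simp [tagComp] at h
  | cons o t ih =>
    cases o with
    | none => exact List.mem_cons_of_mem _ (ih h)
    | some b =>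
      rcases List.mem_cons.mp h with h | h
      · simp_all
      · exact List.mem_cons_of_mem _ (ih h)

theorem count_tagComp_eq_zero {c i a : ℕ} {s : List (Option ℕ)} (h : some a ∉ s) :
    (tagComp c s).count (i, a) = 0 :=
  List.count_eq_zero.mpr fun hm => h (some_mem_of_mem_tagComp hm)

theorem tagComp_sepWord {n : ℕ} (p : Phrase n) (c : ℕ) :
    tagComp c (sepWord p) = (List.ofFn fun k => (p k).map ((c + k : ℕ), ·)).flatten := by
  induction n generalizing c with
  | zero => rfl
  | succ n ih =>
    cases n with
    | zero => simp [sepWord, tagComp_map_some]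
    | succ n =>
      have hsep : sepWord p = (p 0).map some ++ none :: sepWord (fun k => p k.succ) := by
        simp [sepWord, List.ofFn_succ, List.intercalate_cons_cons]
      have hnone : ((p 0).map some).count none = 0 := List.count_eq_zero.mpr (by simp)
      rw [hsep, tagComp_append, hnone, List.ofFn_succ, List.flatten_cons]
      simp [tagComp, tagComp_map_some, ih, Nat.add_assoc, Nat.add_comm 1]

def compCount (s : List (Option ℕ)) (i a : ℕ) : ℕ := (tagComp 0 s).count (i, a)

theorem count_map_prodMk (k i a : ℕ) (w : Word) :
    (w.map (k, ·)).count (i, a) = if k = i then w.count a else 0 := by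
  split_ifs with hki
  · subst hki
    exact List.count_map_of_injective _ _ (Prod.mk_right_injective k) a
  · exact List.count_eq_zero.mpr (by simp [hki])

theorem compCount_sepWord {n : ℕ} (p : Phrase n) (i : Fin n) (a : ℕ) :
    compCount (sepWord p) i a = (p i).count a := by
  simp [compCount, tagComp_sepWord, List.count_flatten, List.map_ofFn, Function.comp_def,
    List.sum_ofFn, count_map_prodMk, Fin.val_inj]

def linkIndicator (s : List (Option ℕ)) (i j a : ℕ) : ZMod 2 :=
  if compCount s i a = 1 ∧ compCount s j a = 1 then 1 else 0

def linkParity (s : List (Option ℕ)) (i j : ℕ) : ZMod 2 :=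
  ∑ a ∈ s.reduceOption.toFinset, linkIndicator s i j a

theorem linkIndicator_eq_zero {s : List (Option ℕ)} {a : ℕ} (h : some a ∉ s) (i j : ℕ) :
    linkIndicator s i j a = 0 := by
  simp [linkIndicator, compCount, count_tagComp_eq_zero h]

theorem linkParity_eq_sum {s : List (Option ℕ)} {i j : ℕ} (T : Finset ℕ)
    (hT : ∀ a ∉ T, linkIndicator s i j a = 0) :
    linkParity s i j = ∑ a ∈ T, linkIndicator s i j a := by
  have hs : ∀ a ∉ s.reduceOption.toFinset, linkIndicator s i j a = 0 := fun a ha =>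
    linkIndicator_eq_zero (by simpa [List.reduceOption_mem_iff] using ha) i j
  rw [linkParity, Finset.sum_subset Finset.subset_union_left fun a _ ha => hs a ha,
    Finset.sum_subset Finset.subset_union_right fun a _ ha => hT a ha]

theorem linkParity_congr {s s' : List (Option ℕ)} {i j : ℕ}
    (h : ∀ a, linkIndicator s i j a = linkIndicator s' i j a) :
    linkParity s i j = linkParity s' i j := by
  rw [linkParity, linkParity_eq_sum (s := s') s.reduceOption.toFinset fun a ha => by
    rw [← h, linkIndicator_eq_zero (by simpa [List.reduceOption_mem_iff] using ha)]]
  exact Finset.sum_congr rfl fun a _ => h a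

theorem linkParity_eq_of_pair {s s' : List (Option ℕ)} {i j A B : ℕ} (hAB : A ≠ B)
    (h : ∀ a, a ≠ A → a ≠ B → linkIndicator s i j a = linkIndicator s' i j a)
    (hs : linkIndicator s i j A = linkIndicator s i j B)
    (hA : linkIndicator s' i j A = 0) (hB : linkIndicator s' i j B = 0) :
    linkParity s i j = linkParity s' i j := by
  set T := insert A (insert B (s.reduceOption.toFinset ∪ s'.reduceOption.toFinset))
  have hT : ∀ t, t = s ∨ t = s' → ∀ a ∉ T, linkIndicator t i j a = 0 := by
    rintro t (rfl | rfl) a ha <;>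
      exact linkIndicator_eq_zero (by simp_all [T, List.reduceOption_mem_iff]) i j
  have hAT : A ∈ T := Finset.mem_insert_self _ _
  have hBT : B ∈ T.erase A := Finset.mem_erase.mpr ⟨hAB.symm, by simp [T]⟩
  rw [linkParity_eq_sum T (hT s (.inl rfl)), linkParity_eq_sum T (hT s' (.inr rfl)),
    ← Finset.add_sum_erase T _ hAT, ← Finset.add_sum_erase T _ hAT,
    ← Finset.add_sum_erase _ _ hBT, ← Finset.add_sum_erase _ _ hBT, hs, hA, hB,
    ← add_assoc, CharTwo.add_self_eq_zero]
  simp only [zero_add]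
  refine Finset.sum_congr rfl fun a ha => ?_
  obtain ⟨haB, haA, -⟩ := by simpa using ha
  exact h a haA haB

section Moves

variable {x y z w : List (Option ℕ)} {A B C : ℕ}

theorem compCount_h1 (hA : some A ∉ x ++ y) (i a : ℕ) :
    compCount (x ++ some A :: some A :: y) i a =
      compCount (x ++ y) i a + if a = A ∧ i = x.count none then 2 else 0 := by
  simp only [List.mem_append, not_or] at hA
  by_cases ha : a = A
  · subst ha
    simp [compCount, tagComp_append, tagComp, List.count_cons, count_tagComp_eq_zero hA.1,
      count_tagComp_eq_zero hA.2]
    split_ifs <;> omega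
  · simp [compCount, tagComp_append, tagComp, ha, Ne.symm ha]

theorem linkParity_h1 (hA : some A ∉ x ++ y) (i j : ℕ) :
    linkParity (x ++ some A :: some A :: y) i j = linkParity (x ++ y) i j := by
  refine linkParity_congr fun a => ?_
  by_cases ha : a = A
  · subst ha
    have hne : ∀ k, compCount (x ++ some a :: some a :: y) k a ≠ 1 := fun k => by
      rw [compCount_h1 hA, show compCount (x ++ y) k a = 0 from count_tagComp_eq_zero hA]
      split_ifs <;> simp
    rw [linkIndicator_eq_zero hA]
    simp [linkIndicator, hne]
  · simp only [linkIndicator, compCount_h1 hA, ha, false_and, if_false, add_zero]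

theorem compCount_h2 (hAB : A ≠ B) (hA : some A ∉ x ++ y ++ z) (hB : some B ∉ x ++ y ++ z)
    (i a : ℕ) :
    compCount (x ++ some A :: some B :: (y ++ some B :: some A :: z)) i a =
      compCount (x ++ y ++ z) i a +
        if a = A ∨ a = B then
          (if i = x.count none then 1 else 0) + (if i = x.count none + y.count none then 1 else 0)
        else 0 := by
  simp only [List.mem_append, not_or] at hA hB
  by_cases ha : a = A
  · subst ha
    simp [compCount, tagComp_append, tagComp, List.count_cons, count_tagComp_eq_zero hA.1.1,
      count_tagComp_eq_zero hA.1.2, count_tagComp_eq_zero hA.2, hAB]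
    split_ifs <;> omega
  by_cases hb : a = B
  · subst hb
    simp [compCount, tagComp_append, tagComp, List.count_cons, count_tagComp_eq_zero hB.1.1,
      count_tagComp_eq_zero hB.1.2, count_tagComp_eq_zero hB.2, hAB, Ne.symm hAB]
    split_ifs <;> omega
  · simp [compCount, tagComp_append, tagComp, ha, Ne.symm ha, hb, Ne.symm hb]

theorem linkParity_h2 (hAB : A ≠ B) (hA : some A ∉ x ++ y ++ z) (hB : some B ∉ x ++ y ++ z)
    (i j : ℕ) :
    linkParity (x ++ some A :: some B :: (y ++ some B :: some A :: z)) i j =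
      linkParity (x ++ y ++ z) i j := by
  refine linkParity_eq_of_pair hAB (fun a ha hb => ?_) ?_
    (linkIndicator_eq_zero hA i j) (linkIndicator_eq_zero hB i j)
  · simp only [linkIndicator, compCount_h2 hAB hA hB, ha, hb, or_self, if_false, add_zero]
  · have h0 : ∀ k, compCount (x ++ y ++ z) k A = 0 ∧ compCount (x ++ y ++ z) k B = 0 :=
      fun k => ⟨count_tagComp_eq_zero hA, count_tagComp_eq_zero hB⟩
    simp only [linkIndicator, compCount_h2 hAB hA hB, h0, true_or, or_true, if_true]

theorem compCount_h3 (i a : ℕ) :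
    compCount (w ++ some A :: some B :: (x ++ some A :: some C :: (y ++ some B :: some C :: z)))
        i a =
      compCount (w ++ some B :: some A :: (x ++ some C :: some A :: (y ++ some C :: some B :: z)))
        i a := by
  simp [compCount, tagComp_append, tagComp, List.count_cons]
  ring

theorem linkParity_h3 (i j : ℕ) :
    linkParity (w ++ some A :: some B :: (x ++ some A :: some C :: (y ++ some B :: some C :: z)))
        i j =
      linkParity (w ++ some B :: some A :: (x ++ some C :: some A :: (y ++ some C :: some B :: z)))
        i j :=
  linkParity_congr fun a => by rw [linkIndicator, linkIndicator, compCount_h3, compCount_h3]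

end Moves

theorem linkingMatrix_apply_of_ne {n : ℕ} (p : Phrase n) {i j : Fin n} (hij : i ≠ j) :
    linkingMatrix p i j = linkParity (sepWord p) i j := by
  rw [linkingMatrix, Matrix.of_apply, if_neg hij, Finset.natCast_card_filter,
    linkParity_eq_sum (totalWord p).toFinset fun a ha => ?_]
  · refine Finset.sum_congr rfl fun a _ => ?_
    simp only [linkIndicator, compCount_sepWord]
  · have hpi : a ∉ p i := fun h => ha <| List.mem_toFinset.mpr <|
      List.mem_flatten.mpr ⟨p i, List.mem_ofFn.mpr ⟨i, rfl⟩, h⟩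
    simp [linkIndicator, compCount_sepWord, List.count_eq_zero_of_not_mem hpi]

theorem totalWord_map {n : ℕ} (p : Phrase n) (f : ℕ → ℕ) :
    totalWord (fun i => (p i).map f) = (totalWord p).map f := by
  simp [totalWord, List.map_flatten, List.map_ofFn, Function.comp_def]

theorem linkingMatrix_map {n : ℕ} (p : Phrase n) {f : ℕ → ℕ} (hf : Function.Injective f) :
    linkingMatrix (fun i => (p i).map f) = linkingMatrix p := by
  have himage : ((totalWord p).map f).toFinset = (totalWord p).toFinset.image f := by
    ext; simp
  ext i j
  simp only [linkingMatrix, Matrix.of_apply, totalWord_map, himage, Finset.filter_image,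
    List.count_map_of_injective _ f hf, Finset.card_image_of_injective _ hf]

theorem linkingMatrix_update_rotate {n : ℕ} (p : Phrase n) {k : Fin n} {A : ℕ} {y : Word}
    (hp : p k = A :: y) :
    linkingMatrix (Function.update p k (y ++ [A])) = linkingMatrix p := by
  ext i j
  by_cases hij : i = j
  · simp [linkingMatrix, hij]
  rw [linkingMatrix_apply_of_ne _ hij, linkingMatrix_apply_of_ne _ hij]
  have hcount : ∀ l a, (Function.update p k (y ++ [A]) l).count a = (p l).count a := by
    intro l a
    rcases eq_or_ne l k with rfl | hl
    · rw [Function.update_self, hp]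
      exact List.perm_append_singleton A y |>.count_eq a
    · rw [Function.update_of_ne hl]
  exact linkParity_congr fun a => by simp only [linkIndicator, compCount_sepWord, hcount]

theorem OpenMove.linkingMatrix_eq {n : ℕ} {p q : Phrase n} (h : OpenMove p q) :
    linkingMatrix p = linkingMatrix q := by
  ext i j
  by_cases hij : i = j
  · simp [linkingMatrix, hij]
  cases h with
  | iso f hf => rw [linkingMatrix_map p hf.1]
  | h1 q A x y hA hp hq =>
    rw [linkingMatrix_apply_of_ne p hij, linkingMatrix_apply_of_ne q hij, hp, hq,
      linkParity_h1 hA]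
  | h2 q A B x y z hAB hA hB hp hq =>
    rw [linkingMatrix_apply_of_ne p hij, linkingMatrix_apply_of_ne q hij, hp, hq,
      linkParity_h2 hAB hA hB]
  | h3 q A B C w x y z _ _ _ _ _ _ hp hq =>
    rw [linkingMatrix_apply_of_ne p hij, linkingMatrix_apply_of_ne q hij, hp, hq,
      linkParity_h3]

theorem ShiftMove.linkingMatrix_eq {n : ℕ} {p q : Phrase n} (h : ShiftMove p q) :
    linkingMatrix p = linkingMatrix q := by
  cases h with
  | shift k A y hp => exact (linkingMatrix_update_rotate p hp).symm

theorem Homotopic.linkingMatrix_eq {n : ℕ} {p q : Phrase n} (h : Homotopic p q) :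
    linkingMatrix p = linkingMatrix q := by
  induction h with
  | rel p q h => exact h.elim OpenMove.linkingMatrix_eq ShiftMove.linkingMatrix_eq
  | refl => rfl
  | symm _ _ _ ih => exact ih.symm
  | trans _ _ _ _ _ ih₁ ih₂ => exact ih₁.trans ih₂

/-- the Gauss phrases `∅|∅|∅` and `AB|AC|BC` (letters `A,B,C` encoded as
`0,1,2`) are not homotopic. -/
theorem trivial_not_homotopic_to_ABACBC :
    ¬ Homotopic (![[], [], []] : Phrase 3) (![[0, 1], [0, 2], [1, 2]] : Phrase 3) := fun h =>
  absurd (congrFun (congrFun h.linkingMatrix_eq 0) 1) (by decide)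
end
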